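/- (Uniform estimate (6) of Theorem 3.1 for the GBGS method.) Let {x_k} be the iterates of the GBGS method with parameter θ ∈ [0,1]: for each k ≥ 0, Aᵀ(b − A x_k) ≠ 0, J_k is the greedy index set determined by θ and r_k = b − A x_k (each J_k a proper subset of {1,…,n}), and x_{k+1} = x_k + I_{J_k} A_{J_k}† (b − A x_k). Let α, β, γ > 0 be such that σ_max(A_{J_k})² ≤ α, ‖A_{J_k}‖_F² ≥ β, and ‖A‖_F² − ‖A_{J_k}‖_F² ≤ γ for all k. Then for all k ≥ 1, ‖x_k − x⋆‖²_{AᵀA} ≤ (1 − (β/α)·(θ·‖A‖_F²/γ + (1−θ))·σ_min(A)²/‖A‖_F²)^{k−1} · (1 − (‖A_{J₀}‖_F²/σ_max(A_{J₀})²)·σ_min(A)²/‖A‖_F²) · ‖x₀ − x⋆‖²_{AᵀA}. -/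

import Mathlib

noncomputable section
open Matrix

/-- Squared Euclidean norm `‖v‖₂²` of a vector. -/
def norm2 {ι : Type*} [Fintype ι] (v : ι → ℝ) : ℝ := ∑ i, (v i) ^ 2

/-- Squared Frobenius norm `‖A‖_F²` of a matrix. -/
def frob2 {ι κ : Type*} [Fintype ι] [Fintype κ] (A : Matrix ι κ ℝ) : ℝ :=
  ∑ i, ∑ j, (A i j) ^ 2

/-- Squared largest singular value `σ_max(B)²`, i.e. the largest eigenvalue of `Bᵀ * B`. -/
def sigmaMaxSq {ι κ : Type*} [Fintype ι] [Fintype κ] [DecidableEq κ]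
    (B : Matrix ι κ ℝ) : ℝ :=
  sSup (Set.range (Matrix.isHermitian_conjTranspose_mul_self B).eigenvalues)

/-- Squared smallest singular value `σ_min(B)²`, i.e. the smallest eigenvalue of `Bᵀ * B`. -/
def sigmaMinSq {ι κ : Type*} [Fintype ι] [Fintype κ] [DecidableEq κ]
    (B : Matrix ι κ ℝ) : ℝ :=
  sInf (Set.range (Matrix.isHermitian_conjTranspose_mul_self B).eigenvalues)

/-- Squared Euclidean norm `‖A_(j)‖₂²` of the `j`-th column of `A`. -/
def col2 {m n : ℕ} (A : Matrix (Fin m) (Fin n) ℝ) (j : Fin n) : ℝ := ∑ i, (A i j) ^ 2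

/-- `A` has full column rank: its columns are linearly independent. -/
def FullColRank {m n : ℕ} (A : Matrix (Fin m) (Fin n) ℝ) : Prop :=
  LinearIndependent ℝ fun j : Fin n => (fun i => A i j : Fin m → ℝ)

/-- `max_{1 ≤ j ≤ n} |A_(j)ᵀ r|² / ‖A_(j)‖₂²`. -/
def maxRatio {m n : ℕ} (A : Matrix (Fin m) (Fin n) ℝ) (r : Fin m → ℝ) : ℝ :=
  ⨆ j : Fin n, ((Aᵀ *ᵥ r) j) ^ 2 / col2 A j

/-- The greedy parameter
`ε = (θ/‖Aᵀr‖₂²)·max_j |A_(j)ᵀ r|²/‖A_(j)‖₂² + (1−θ)/‖A‖_F²`. -/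
def eps {m n : ℕ} (A : Matrix (Fin m) (Fin n) ℝ) (r : Fin m → ℝ) (θ : ℝ) : ℝ :=
  θ / norm2 (Aᵀ *ᵥ r) * maxRatio A r + (1 - θ) / frob2 A

open Classical in
/-- The greedy index set `J = { j : |A_(j)ᵀ r|² ≥ ε ‖Aᵀr‖₂² ‖A_(j)‖₂² }`. -/
def greedySet {m n : ℕ} (A : Matrix (Fin m) (Fin n) ℝ) (r : Fin m → ℝ) (θ : ℝ) :
    Finset (Fin n) :=
  Finset.univ.filter fun j =>
    eps A r θ * norm2 (Aᵀ *ᵥ r) * col2 A j ≤ ((Aᵀ *ᵥ r) j) ^ 2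

/-- The column submatrix `A_J` of `A`, with columns indexed by `J`. -/
def subCols {m n : ℕ} (A : Matrix (Fin m) (Fin n) ℝ) (J : Finset (Fin n)) :
    Matrix (Fin m) {j // j ∈ J} ℝ :=
  A.submatrix id fun j => (j : Fin n)

/-- The submatrix `I_J` of the `n × n` identity with columns indexed by `J`. -/
def subId {n : ℕ} (J : Finset (Fin n)) : Matrix (Fin n) {j // j ∈ J} ℝ :=
  (1 : Matrix (Fin n) (Fin n) ℝ).submatrix id fun j => (j : Fin n)

/-- Moore–Penrose pseudoinverse of a full-column-rank matrix: `B† = (BᵀB)⁻¹Bᵀ`. -/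
def pinv {ι κ : Type*} [Fintype ι] [Fintype κ] [DecidableEq κ] (B : Matrix ι κ ℝ) :
    Matrix κ ι ℝ :=
  (Bᵀ * B)⁻¹ * Bᵀ

/-- The matrix `Ã_J` whose columns are the normalized columns `A_(j)/‖A_(j)‖₂`, `j ∈ J`. -/
def tildeA {m n : ℕ} (A : Matrix (Fin m) (Fin n) ℝ) (J : Finset (Fin n)) :
    Matrix (Fin m) {j // j ∈ J} ℝ :=
  Matrix.of fun i j => A i (j : Fin n) / Real.sqrt (col2 A (j : Fin n))

/-- The matrix `Ĩ_J` whose columns are `e_j/‖A_(j)‖₂`, `j ∈ J`. -/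
def tildeI {m n : ℕ} (A : Matrix (Fin m) (Fin n) ℝ) (J : Finset (Fin n)) :
    Matrix (Fin n) {j // j ∈ J} ℝ :=
  Matrix.of fun i j => (if i = (j : Fin n) then 1 else 0) / Real.sqrt (col2 A (j : Fin n))

/-! The energy error `E(x) = ‖A(x − x⋆)‖²` drops in a block step by exactly `‖A(x' − x)‖²`, since
`A(x' − x⋆)` is orthogonal to the range of `A_J`, which contains `A(x' − x)`. That drop is at least
`‖A_Jᵀ r‖² / σ_max(A_J)²`, and the greedy rule gives `‖A_Jᵀ r‖² ≥ ε ‖Aᵀ r‖² ‖A_J‖_F²`. Finally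
`ε ‖Aᵀ r‖² ‖A‖_F² ≥ c ‖Aᵀ r‖² ≥ c σ_min(A)² E(x)` with `c = 1` in general, and with
`c = θ ‖A‖_F²/γ + 1 − θ` from the second step on: then `Aᵀ r_k` vanishes on `J_{k−1}`, so
`‖Aᵀ r_k‖² ≤ γ · max_j |A_(j)ᵀ r_k|² / ‖A_(j)‖₂²`. -/

lemma le_pow_pred_mul_of_le_mul {u : ℕ → ℝ} {ρ C : ℝ} (hu : ∀ k, 0 < u k) (h1 : u 1 ≤ C)
    (hstep : ∀ k, u (k + 2) ≤ ρ * u (k + 1)) : ∀ k, 1 ≤ k → u k ≤ ρ ^ (k - 1) * C := by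
  -- `ρ ≥ 0` is forced by `0 < u 2 ≤ ρ * u 1`.
  have hρ : 0 ≤ ρ := (pos_of_mul_pos_left ((hu 2).trans_le (hstep 0)) (hu 1).le).le
  intro k hk
  obtain ⟨k, rfl⟩ := Nat.exists_eq_add_of_le' hk
  calc u (k + 1) ≤ ρ ^ k * u 1 := le_geom (u := fun k => u (k + 1)) hρ k fun i _ => hstep i
    _ ≤ ρ ^ (k + 1 - 1) * C := by
        rw [Nat.add_sub_cancel]
        exact mul_le_mul_of_nonneg_left h1 (pow_nonneg hρ k)

section Norm2
variable {ι : Type*} [Fintype ι]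

lemma norm2_eq_dotProduct (v : ι → ℝ) : norm2 v = v ⬝ᵥ v := by
  simp only [norm2, dotProduct, sq]

lemma norm2_nonneg (v : ι → ℝ) : 0 ≤ norm2 v :=
  Finset.sum_nonneg fun i _ => sq_nonneg (v i)

lemma norm2_neg (v : ι → ℝ) : norm2 (-v) = norm2 v := by
  simp only [norm2, Pi.neg_apply, neg_sq]

lemma norm2_eq_zero_iff {v : ι → ℝ} : norm2 v = 0 ↔ v = 0 := by
  rw [norm2_eq_dotProduct, dotProduct_self_eq_zero]

lemma norm2_pos {v : ι → ℝ} (hv : v ≠ 0) : 0 < norm2 v :=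
  (norm2_nonneg v).lt_of_ne (Ne.symm (norm2_eq_zero_iff.not.2 hv))

lemma norm2_sub_of_dotProduct_eq_zero {u w : ι → ℝ} (h : u ⬝ᵥ w = 0) :
    norm2 (u - w) = norm2 u + norm2 w := by
  simp only [norm2_eq_dotProduct, sub_dotProduct, dotProduct_sub, h, dotProduct_comm w u]
  ring

lemma norm2_mulVec_eq_dotProduct {κ : Type*} [Fintype κ] (B : Matrix ι κ ℝ) (v : κ → ℝ) :
    norm2 (B *ᵥ v) = v ⬝ᵥ (Bᵀ *ᵥ (B *ᵥ v)) := by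
  rw [norm2_eq_dotProduct, dotProduct_mulVec, ← mulVec_transpose, dotProduct_comm]

lemma frob2_nonneg {κ : Type*} [Fintype κ] (B : Matrix ι κ ℝ) : 0 ≤ frob2 B :=
  Finset.sum_nonneg fun i _ => Finset.sum_nonneg fun j _ => sq_nonneg (B i j)

end Norm2

section Spectral
variable {ι κ : Type*} [Fintype ι] [Fintype κ] [DecidableEq κ] (B : Matrix ι κ ℝ)

lemma transpose_mul_self_eq_spectral :
    Bᵀ * B = (isHermitian_conjTranspose_mul_self B).eigenvectorUnitary.1 *
      diagonal (isHermitian_conjTranspose_mul_self B).eigenvalues *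
      star (isHermitian_conjTranspose_mul_self B).eigenvectorUnitary.1 := by
  conv_lhs => rw [← conjTranspose_eq_transpose_of_trivial,
    (isHermitian_conjTranspose_mul_self B).spectral_theorem]
  simp [RCLike.ofReal_real_eq_id]

lemma exists_eigencoords_norm2_mulVec (v : κ → ℝ) :
    ∃ c : κ → ℝ,
      norm2 (B *ᵥ v) = ∑ i, (isHermitian_conjTranspose_mul_self B).eigenvalues i * c i ^ 2 ∧
      norm2 (Bᵀ *ᵥ (B *ᵥ v)) =
        ∑ i, (isHermitian_conjTranspose_mul_self B).eigenvalues i ^ 2 * c i ^ 2 := by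
  set U : Matrix κ κ ℝ := (isHermitian_conjTranspose_mul_self B).eigenvectorUnitary.1
  set ev := (isHermitian_conjTranspose_mul_self B).eigenvalues
  have hUt : Uᵀ = star U := (conjTranspose_eq_transpose_of_trivial U).symm
  have hUtU : Uᵀ * U = 1 := by rw [hUt]; exact Unitary.coe_star_mul_self _
  have hG : Bᵀ *ᵥ (B *ᵥ v) = U *ᵥ (diagonal ev *ᵥ (Uᵀ *ᵥ v)) := by
    rw [mulVec_mulVec, transpose_mul_self_eq_spectral, hUt, mulVec_mulVec, mulVec_mulVec]
  refine ⟨Uᵀ *ᵥ v, ?_, ?_⟩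
  · rw [norm2_mulVec_eq_dotProduct, hG, dotProduct_mulVec, ← mulVec_transpose]
    simp only [dotProduct, mulVec_diagonal]
    exact Finset.sum_congr rfl fun i _ => by ring
  · rw [hG, norm2_eq_dotProduct, dotProduct_mulVec, ← mulVec_transpose, mulVec_mulVec, hUtU,
      one_mulVec]
    simp only [dotProduct, mulVec_diagonal]
    exact Finset.sum_congr rfl fun i _ => by ring

lemma eigenvalues_transpose_mul_self_nonneg (i : κ) :
    0 ≤ (isHermitian_conjTranspose_mul_self B).eigenvalues i :=
  (posSemidef_conjTranspose_mul_self B).eigenvalues_nonneg i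

lemma sigmaMinSq_nonneg : 0 ≤ sigmaMinSq B :=
  Real.sInf_nonneg <| Set.forall_mem_range.2 (eigenvalues_transpose_mul_self_nonneg B)

lemma sigmaMaxSq_nonneg : 0 ≤ sigmaMaxSq B :=
  Real.sSup_nonneg <| Set.forall_mem_range.2 (eigenvalues_transpose_mul_self_nonneg B)

lemma sigmaMinSq_le_eigenvalues (i : κ) :
    sigmaMinSq B ≤ (isHermitian_conjTranspose_mul_self B).eigenvalues i :=
  csInf_le (Set.finite_range _).bddBelow ⟨i, rfl⟩

lemma eigenvalues_le_sigmaMaxSq (i : κ) :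
    (isHermitian_conjTranspose_mul_self B).eigenvalues i ≤ sigmaMaxSq B :=
  le_csSup (Set.finite_range _).bddAbove ⟨i, rfl⟩

lemma sigmaMinSq_mul_norm2_le (v : κ → ℝ) :
    sigmaMinSq B * norm2 (B *ᵥ v) ≤ norm2 (Bᵀ *ᵥ (B *ᵥ v)) := by
  obtain ⟨c, hBv, hGv⟩ := exists_eigencoords_norm2_mulVec B v
  rw [hBv, hGv, Finset.mul_sum]
  refine Finset.sum_le_sum fun i _ => ?_
  calc sigmaMinSq B * (_ * c i ^ 2)
      ≤ (isHermitian_conjTranspose_mul_self B).eigenvalues i * (_ * c i ^ 2) :=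
        mul_le_mul_of_nonneg_right (sigmaMinSq_le_eigenvalues B i)
          (mul_nonneg (eigenvalues_transpose_mul_self_nonneg B i) (sq_nonneg _))
    _ = _ := by ring

lemma norm2_le_sigmaMaxSq_mul (v : κ → ℝ) :
    norm2 (Bᵀ *ᵥ (B *ᵥ v)) ≤ sigmaMaxSq B * norm2 (B *ᵥ v) := by
  obtain ⟨c, hBv, hGv⟩ := exists_eigencoords_norm2_mulVec B v
  rw [hBv, hGv, Finset.mul_sum]
  refine Finset.sum_le_sum fun i _ => ?_
  calc _ = (isHermitian_conjTranspose_mul_self B).eigenvalues i *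
        ((isHermitian_conjTranspose_mul_self B).eigenvalues i * c i ^ 2) := by ring
    _ ≤ sigmaMaxSq B * (_ * c i ^ 2) :=
        mul_le_mul_of_nonneg_right (eigenvalues_le_sigmaMaxSq B i)
          (mul_nonneg (eigenvalues_transpose_mul_self_nonneg B i) (sq_nonneg _))

lemma frob2_eq_sum_eigenvalues :
    frob2 B = ∑ i, (isHermitian_conjTranspose_mul_self B).eigenvalues i := by
  have h := (isHermitian_conjTranspose_mul_self B).trace_eq_sum_eigenvalues
  simp only [RCLike.ofReal_real_eq_id, id] at h
  rw [← h, frob2, Finset.sum_comm]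
  simp only [trace, diag_apply, mul_apply, conjTranspose_apply, star_trivial, sq]

lemma sigmaMaxSq_pos (hB : 0 < frob2 B) : 0 < sigmaMaxSq B := by
  rw [frob2_eq_sum_eigenvalues] at hB
  obtain ⟨i, -, hi⟩ := Finset.exists_lt_of_sum_lt (s := Finset.univ) (f := fun _ => (0 : ℝ))
    (by simpa using hB)
  exact hi.trans_le (eigenvalues_le_sigmaMaxSq B i)

end Spectral

section Columns
variable {m n : ℕ} (A : Matrix (Fin m) (Fin n) ℝ) (J : Finset (Fin n))

lemma transpose_subCols_mulVec_apply (v : Fin m → ℝ) (j : {j // j ∈ J}) :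
    ((subCols A J)ᵀ *ᵥ v) j = (Aᵀ *ᵥ v) j := rfl

lemma norm2_transpose_subCols_mulVec (v : Fin m → ℝ) :
    norm2 ((subCols A J)ᵀ *ᵥ v) = ∑ j ∈ J, (Aᵀ *ᵥ v) j ^ 2 :=
  (Finset.sum_coe_sort J fun j => (Aᵀ *ᵥ v) j ^ 2)

lemma frob2_subCols : frob2 (subCols A J) = ∑ j ∈ J, col2 A j := by
  rw [frob2, Finset.sum_comm, ← Finset.sum_coe_sort J]
  rfl

lemma frob2_eq_sum_col2 : frob2 A = ∑ j, col2 A j := Finset.sum_comm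

lemma frob2_sub_frob2_subCols : frob2 A - frob2 (subCols A J) = ∑ j ∈ Jᶜ, col2 A j := by
  rw [frob2_eq_sum_col2, frob2_subCols, sub_eq_iff_eq_add, Finset.sum_compl_add_sum]

lemma mul_subId : A * subId J = subCols A J := by
  ext i j
  simp [subId, subCols, mul_apply, one_apply]

lemma isUnit_det_gram_subCols (hA : FullColRank A) :
    IsUnit ((subCols A J)ᵀ * subCols A J).det := by
  have hinj : Function.Injective (subCols A J).mulVec :=
    mulVec_injective_iff.2 (hA.comp _ Subtype.val_injective)
  refine isUnit_iff_ne_zero.2 fun hdet => ?_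
  obtain ⟨v, hv, hGv⟩ := exists_mulVec_eq_zero_iff.2 hdet
  have hBv : norm2 (subCols A J *ᵥ v) = 0 := by
    rw [norm2_mulVec_eq_dotProduct, mulVec_mulVec, hGv, dotProduct_zero]
  exact hv (hinj (by rw [norm2_eq_zero_iff.1 hBv, mulVec_zero]))

end Columns

section BlockStep
variable {m n : ℕ} (A : Matrix (Fin m) (Fin n) ℝ) (b : Fin m → ℝ) (xstar : Fin n → ℝ)
  (J : Finset (Fin n)) (x : Fin n → ℝ)

def blockStep : Fin n → ℝ := x + subId J *ᵥ (pinv (subCols A J) *ᵥ (b - A *ᵥ x))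

lemma mulVec_blockStep_sub :
    A *ᵥ (blockStep A b J x - x) = subCols A J *ᵥ (pinv (subCols A J) *ᵥ (b - A *ᵥ x)) := by
  rw [blockStep, add_sub_cancel_left, mulVec_mulVec, mul_subId]

lemma transpose_subCols_mulVec_pinv (hA : FullColRank A) (v : Fin m → ℝ) :
    (subCols A J)ᵀ *ᵥ (subCols A J *ᵥ (pinv (subCols A J) *ᵥ v)) = (subCols A J)ᵀ *ᵥ v := by
  rw [pinv, mulVec_mulVec, mulVec_mulVec, ← Matrix.mul_assoc,
    mul_nonsing_inv _ (isUnit_det_gram_subCols A J hA), Matrix.one_mul]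

lemma transpose_subCols_mulVec_residual_blockStep (hA : FullColRank A) :
    (subCols A J)ᵀ *ᵥ (b - A *ᵥ blockStep A b J x) = 0 := by
  have hres : b - A *ᵥ blockStep A b J x =
      (b - A *ᵥ x) - A *ᵥ (blockStep A b J x - x) := by
    rw [mulVec_sub]; abel
  rw [hres, mulVec_blockStep_sub, mulVec_sub, transpose_subCols_mulVec_pinv A J hA, sub_self]

lemma transpose_mulVec_residual (hstar : (Aᵀ * A) *ᵥ xstar = Aᵀ *ᵥ b) :
    Aᵀ *ᵥ (b - A *ᵥ x) = -(Aᵀ *ᵥ (A *ᵥ (x - xstar))) := by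
  rw [mulVec_sub, mulVec_sub, mulVec_sub, ← hstar, mulVec_mulVec, mulVec_mulVec]
  abel

lemma norm2_mulVec_sub_eq_add_blockStep (hA : FullColRank A)
    (hstar : (Aᵀ * A) *ᵥ xstar = Aᵀ *ᵥ b) :
    norm2 (A *ᵥ (x - xstar)) =
      norm2 (A *ᵥ (blockStep A b J x - xstar)) + norm2 (A *ᵥ (blockStep A b J x - x)) := by
  have horth : (subCols A J)ᵀ *ᵥ (A *ᵥ (blockStep A b J x - xstar)) = 0 := by
    ext j
    have h := congrFun (transpose_subCols_mulVec_residual_blockStep A b J x hA) j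
    rw [transpose_subCols_mulVec_apply, transpose_mulVec_residual A b xstar _ hstar] at h
    rw [transpose_subCols_mulVec_apply]
    simpa only [Pi.neg_apply, Pi.zero_apply, neg_eq_zero] using h
  have hdot : A *ᵥ (blockStep A b J x - xstar) ⬝ᵥ A *ᵥ (blockStep A b J x - x) = 0 := by
    rw [mulVec_blockStep_sub, dotProduct_mulVec, ← mulVec_transpose, horth, zero_dotProduct]
  rw [← norm2_sub_of_dotProduct_eq_zero hdot, ← mulVec_sub, sub_sub_sub_cancel_left]

lemma norm2_transpose_subCols_mulVec_residual_le (hA : FullColRank A) :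
    norm2 ((subCols A J)ᵀ *ᵥ (b - A *ᵥ x)) ≤
      sigmaMaxSq (subCols A J) * norm2 (A *ᵥ (blockStep A b J x - x)) := by
  rw [mulVec_blockStep_sub, ← transpose_subCols_mulVec_pinv A J hA]
  exact norm2_le_sigmaMaxSq_mul _ _

end BlockStep

section Greedy
variable {m n : ℕ} (A : Matrix (Fin m) (Fin n) ℝ) (r : Fin m → ℝ) (θ : ℝ)

lemma col2_nonneg (j : Fin n) : 0 ≤ col2 A j := Finset.sum_nonneg fun i _ => sq_nonneg (A i j)

lemma maxRatio_nonneg : 0 ≤ maxRatio A r :=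
  Real.iSup_nonneg fun j => div_nonneg (sq_nonneg _) (col2_nonneg A j)

lemma sq_le_maxRatio_mul_col2 (j : Fin n) : (Aᵀ *ᵥ r) j ^ 2 ≤ maxRatio A r * col2 A j := by
  rcases (col2_nonneg A j).eq_or_lt with h0 | hpos
  -- a zero column enters `maxRatio` as `0 / 0 = 0`, but then `(Aᵀ *ᵥ r) j = 0` as well
  · have hcol : ∀ i, A i j = 0 := fun i =>
      pow_eq_zero_iff two_ne_zero |>.1 <|
        (Finset.sum_eq_zero_iff_of_nonneg fun i _ => sq_nonneg (A i j)).1 h0.symm i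
          (Finset.mem_univ i)
    simp [← h0, mulVec, dotProduct, hcol]
  · rw [← div_le_iff₀ hpos]
    exact le_ciSup (f := fun j => (Aᵀ *ᵥ r) j ^ 2 / col2 A j) (Set.finite_range _).bddAbove j

lemma norm2_le_maxRatio_mul_frob2 : norm2 (Aᵀ *ᵥ r) ≤ maxRatio A r * frob2 A := by
  rw [frob2_eq_sum_col2, Finset.mul_sum]
  exact Finset.sum_le_sum fun j _ => sq_le_maxRatio_mul_col2 A r j

lemma norm2_le_maxRatio_mul_of_eq_zero (J : Finset (Fin n)) (hJ : ∀ j ∈ J, (Aᵀ *ᵥ r) j = 0) :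
    norm2 (Aᵀ *ᵥ r) ≤ maxRatio A r * (frob2 A - frob2 (subCols A J)) := by
  rw [frob2_sub_frob2_subCols, Finset.mul_sum, norm2,
    ← Finset.sum_compl_add_sum J,
    Finset.sum_eq_zero (s := J) fun j hj => by rw [hJ j hj, sq, mul_zero],
    add_zero]
  exact Finset.sum_le_sum fun j _ => sq_le_maxRatio_mul_col2 A r j

lemma frob2_pos (hr : Aᵀ *ᵥ r ≠ 0) : 0 < frob2 A := by
  have h := (norm2_pos hr).trans_le (norm2_le_maxRatio_mul_frob2 A r)
  exact pos_of_mul_pos_right h (maxRatio_nonneg A r)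

lemma eps_mul_norm2_mul_frob2 (hr : Aᵀ *ᵥ r ≠ 0) :
    eps A r θ * norm2 (Aᵀ *ᵥ r) * frob2 A =
      θ * maxRatio A r * frob2 A + (1 - θ) * norm2 (Aᵀ *ᵥ r) := by
  have hN := (norm2_pos hr).ne'
  have hF := (frob2_pos A r hr).ne'
  rw [eps]
  field_simp

lemma le_eps_mul_norm2_mul_frob2 (hθ : θ ∈ Set.Icc (0 : ℝ) 1) (hr : Aᵀ *ᵥ r ≠ 0) {γ : ℝ}
    (hγ : 0 < γ) (hNγ : norm2 (Aᵀ *ᵥ r) ≤ maxRatio A r * γ) :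
    (θ * frob2 A / γ + (1 - θ)) * norm2 (Aᵀ *ᵥ r) ≤ eps A r θ * norm2 (Aᵀ *ᵥ r) * frob2 A := by
  rw [eps_mul_norm2_mul_frob2 A r θ hr, add_mul]
  gcongr ?_ + _
  calc θ * frob2 A / γ * norm2 (Aᵀ *ᵥ r) = θ * frob2 A * (norm2 (Aᵀ *ᵥ r) / γ) := by ring
    _ ≤ θ * frob2 A * maxRatio A r := by
        gcongr
        · exact mul_nonneg hθ.1 (frob2_pos A r hr).le
        · exact (div_le_iff₀ hγ).2 hNγ
    _ = θ * maxRatio A r * frob2 A := by ring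

lemma eps_mul_norm2_mul_frob2_greedySet_le :
    eps A r θ * norm2 (Aᵀ *ᵥ r) * frob2 (subCols A (greedySet A r θ)) ≤
      norm2 ((subCols A (greedySet A r θ))ᵀ *ᵥ r) := by
  rw [frob2_subCols, norm2_transpose_subCols_mulVec, Finset.mul_sum]
  exact Finset.sum_le_sum fun j hj => (Finset.mem_filter.1 hj).2

end Greedy

section Convergence
variable {m n : ℕ} (A : Matrix (Fin m) (Fin n) ℝ) (b : Fin m → ℝ) (xstar : Fin n → ℝ)
  (x : Fin n → ℝ)

lemma sigmaMinSq_mul_norm2_le_norm2_residual (hstar : (Aᵀ * A) *ᵥ xstar = Aᵀ *ᵥ b) :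
    sigmaMinSq A * norm2 (A *ᵥ (x - xstar)) ≤ norm2 (Aᵀ *ᵥ (b - A *ᵥ x)) := by
  rw [transpose_mulVec_residual A b xstar x hstar, norm2_neg]
  exact sigmaMinSq_mul_norm2_le A (x - xstar)

lemma norm2_mulVec_sub_pos (hstar : (Aᵀ * A) *ᵥ xstar = Aᵀ *ᵥ b)
    (hr : Aᵀ *ᵥ (b - A *ᵥ x) ≠ 0) : 0 < norm2 (A *ᵥ (x - xstar)) :=
  norm2_pos fun h0 => hr <| by
    rw [transpose_mulVec_residual A b xstar x hstar, h0, mulVec_zero, neg_zero]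

variable (hA : FullColRank A) (hstar : (Aᵀ * A) *ᵥ xstar = Aᵀ *ᵥ b) {θ : ℝ}
  {J : Finset (Fin n)} (hJ : J = greedySet A (b - A *ᵥ x) θ) (hr : Aᵀ *ᵥ (b - A *ᵥ x) ≠ 0)
include hA hstar hJ hr

lemma norm2_mulVec_blockStep_sub_le_of_mul_le {c : ℝ} (hc : 0 ≤ c)
    (hcN : c * norm2 (Aᵀ *ᵥ (b - A *ᵥ x)) ≤
      eps A (b - A *ᵥ x) θ * norm2 (Aᵀ *ᵥ (b - A *ᵥ x)) * frob2 A) :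
    norm2 (A *ᵥ (blockStep A b J x - xstar)) ≤
      (1 - frob2 (subCols A J) / sigmaMaxSq (subCols A J) * c * (sigmaMinSq A / frob2 A)) *
        norm2 (A *ᵥ (x - xstar)) := by
  set r := b - A *ᵥ x
  set εN := eps A r θ * norm2 (Aᵀ *ᵥ r)
  set D := norm2 (A *ᵥ (blockStep A b J x - x))
  have hF := frob2_pos A r hr
  have hsplit := norm2_mulVec_sub_eq_add_blockStep A b xstar J x hA hstar
  have hgreedy : εN * frob2 (subCols A J) ≤ norm2 ((subCols A J)ᵀ *ᵥ r) :=
    hJ ▸ eps_mul_norm2_mul_frob2_greedySet_le A r θ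
  have hdecr := norm2_transpose_subCols_mulVec_residual_le A b J x hA
  have hmin := sigmaMinSq_mul_norm2_le_norm2_residual A b xstar x hstar
  have hdecrease : frob2 (subCols A J) / sigmaMaxSq (subCols A J) * c *
      (sigmaMinSq A / frob2 A) * norm2 (A *ᵥ (x - xstar)) ≤ D :=
    calc _ = frob2 (subCols A J) / sigmaMaxSq (subCols A J) *
          (c * (sigmaMinSq A * norm2 (A *ᵥ (x - xstar))) / frob2 A) := by ring
      _ ≤ frob2 (subCols A J) / sigmaMaxSq (subCols A J) * εN := by
          gcongr
          · exact div_nonneg (frob2_nonneg _) (sigmaMaxSq_nonneg _)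
          · rw [div_le_iff₀ hF]
            exact (mul_le_mul_of_nonneg_left hmin hc).trans hcN
      _ = εN * frob2 (subCols A J) / sigmaMaxSq (subCols A J) := by ring
      _ ≤ D := div_le_of_le_mul₀ (sigmaMaxSq_nonneg _) (norm2_nonneg _)
          (by rw [mul_comm D]; exact hgreedy.trans hdecr)
  linarith

lemma norm2_mulVec_blockStep_sub_le (hθ : θ ∈ Set.Icc (0 : ℝ) 1) :
    norm2 (A *ᵥ (blockStep A b J x - xstar)) ≤
      (1 - frob2 (subCols A J) / sigmaMaxSq (subCols A J) * (sigmaMinSq A / frob2 A)) *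
        norm2 (A *ᵥ (x - xstar)) := by
  have hF := frob2_pos A _ hr
  have hc := le_eps_mul_norm2_mul_frob2 A _ θ hθ hr hF (norm2_le_maxRatio_mul_frob2 A _)
  rw [mul_div_assoc, div_self hF.ne', mul_one, add_sub_cancel] at hc
  simpa only [mul_one] using
    norm2_mulVec_blockStep_sub_le_of_mul_le A b xstar x hA hstar hJ hr zero_le_one hc

lemma norm2_mulVec_blockStep_sub_le_uniform (hθ : θ ∈ Set.Icc (0 : ℝ) 1)
    {J' : Finset (Fin n)} {x' : Fin n → ℝ} (hx : x = blockStep A b J' x') {α β γ : ℝ}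
    (hβ : 0 < β) (hγ : 0 < γ) (hαJ : sigmaMaxSq (subCols A J) ≤ α)
    (hβJ : β ≤ frob2 (subCols A J)) (hγJ' : frob2 A - frob2 (subCols A J') ≤ γ) :
    norm2 (A *ᵥ (blockStep A b J x - xstar)) ≤
      (1 - β / α * (θ * frob2 A / γ + (1 - θ)) * (sigmaMinSq A / frob2 A)) *
        norm2 (A *ᵥ (x - xstar)) := by
  have horth : ∀ j ∈ J', (Aᵀ *ᵥ (b - A *ᵥ x)) j = 0 := fun j hj => by
    rw [hx]
    exact congrFun (transpose_subCols_mulVec_residual_blockStep A b J' x' hA) ⟨j, hj⟩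
  have hNγ := (norm2_le_maxRatio_mul_of_eq_zero A _ J' horth).trans
    (mul_le_mul_of_nonneg_left hγJ' (maxRatio_nonneg A _))
  have hc : 0 ≤ θ * frob2 A / γ + (1 - θ) :=
    add_nonneg (div_nonneg (mul_nonneg hθ.1 (frob2_nonneg A)) hγ.le) (sub_nonneg.2 hθ.2)
  have hκ : β / α ≤ frob2 (subCols A J) / sigmaMaxSq (subCols A J) :=
    div_le_div₀ (frob2_nonneg _) hβJ (sigmaMaxSq_pos _ (hβ.trans_le hβJ)) hαJ
  refine (norm2_mulVec_blockStep_sub_le_of_mul_le A b xstar x hA hstar hJ hr hc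
    (le_eps_mul_norm2_mul_frob2 A _ θ hθ hr hγ hNγ)).trans ?_
  refine mul_le_mul_of_nonneg_right (sub_le_sub_left ?_ 1) (norm2_nonneg _)
  exact mul_le_mul_of_nonneg_right (mul_le_mul_of_nonneg_right hκ hc)
    (div_nonneg (sigmaMinSq_nonneg A) (frob2_pos A _ hr).le)

end Convergence

theorem stmt9_general {m n : ℕ} (A : Matrix (Fin m) (Fin n) ℝ) (hA : FullColRank A)
    (b : Fin m → ℝ) (xstar : Fin n → ℝ) (hstar : (Aᵀ * A) *ᵥ xstar = Aᵀ *ᵥ b)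
    (θ : ℝ) (hθ : θ ∈ Set.Icc (0 : ℝ) 1)
    (x : ℕ → Fin n → ℝ)
    (hres : ∀ k : ℕ, Aᵀ *ᵥ (b - A *ᵥ x k) ≠ 0)
    (J : ℕ → Finset (Fin n)) (hJ : ∀ k : ℕ, J k = greedySet A (b - A *ᵥ x k) θ)
    (hiter : ∀ k : ℕ,
      x (k + 1) = x k + subId (J k) *ᵥ (pinv (subCols A (J k)) *ᵥ (b - A *ᵥ x k)))
    (α β γ : ℝ) (hβ : 0 < β) (hγ : 0 < γ)
    (hαb : ∀ k : ℕ, sigmaMaxSq (subCols A (J k)) ≤ α)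
    (hβb : ∀ k : ℕ, β ≤ frob2 (subCols A (J k)))
    (hγb : ∀ k : ℕ, frob2 A - frob2 (subCols A (J k)) ≤ γ) :
    ∀ k : ℕ, 1 ≤ k →
      norm2 (A *ᵥ (x k - xstar)) ≤
        (1 - β / α * (θ * frob2 A / γ + (1 - θ)) * (sigmaMinSq A / frob2 A)) ^ (k - 1) *
          ((1 - frob2 (subCols A (J 0)) / sigmaMaxSq (subCols A (J 0)) *
              (sigmaMinSq A / frob2 A)) *
            norm2 (A *ᵥ (x 0 - xstar))) := by
  have hx : ∀ k, x (k + 1) = blockStep A b (J k) (x k) := hiter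
  refine le_pow_pred_mul_of_le_mul (u := fun k => norm2 (A *ᵥ (x k - xstar)))
    (fun k => norm2_mulVec_sub_pos A b xstar (x k) hstar (hres k)) ?_ fun k => ?_
  · simpa only [hx 0] using
      norm2_mulVec_blockStep_sub_le A b xstar (x 0) hA hstar (hJ 0) (hres 0) hθ
  · simpa only [hx (k + 1)] using
      norm2_mulVec_blockStep_sub_le_uniform A b xstar (x (k + 1)) hA hstar (hJ (k + 1))
        (hres (k + 1)) hθ (hx k) hβ hγ (hαb _) (hβb _) (hγb k)

/-- uniform estimate (6) of Theorem 3.1, GBGS method: for the GBGS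
iterates `x_k` with uniform bounds `σ_max(A_{J_k})² ≤ α`, `‖A_{J_k}‖_F² ≥ β`,
`‖A‖_F² − ‖A_{J_k}‖_F² ≤ γ`, one has for all `k ≥ 1`
`‖x_k − x⋆‖²_{AᵀA} ≤ (1 − (β/α)(θ‖A‖_F²/γ + (1−θ))σ_min(A)²/‖A‖_F²)^{k−1}
  (1 − (‖A_{J₀}‖_F²/σ_max(A_{J₀})²)σ_min(A)²/‖A‖_F²) ‖x₀ − x⋆‖²_{AᵀA}`. -/
theorem stmt9 {m n : ℕ} (A : Matrix (Fin m) (Fin n) ℝ) (hA : FullColRank A)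
    (b : Fin m → ℝ) (xstar : Fin n → ℝ) (hstar : (Aᵀ * A) *ᵥ xstar = Aᵀ *ᵥ b)
    (θ : ℝ) (hθ : θ ∈ Set.Icc (0 : ℝ) 1)
    (x : ℕ → Fin n → ℝ)
    (hres : ∀ k : ℕ, Aᵀ *ᵥ (b - A *ᵥ x k) ≠ 0)
    (J : ℕ → Finset (Fin n)) (hJ : ∀ k : ℕ, J k = greedySet A (b - A *ᵥ x k) θ)
    (hproper : ∀ k : ℕ, J k ≠ Finset.univ)
    (hiter : ∀ k : ℕ,
      x (k + 1) = x k + subId (J k) *ᵥ (pinv (subCols A (J k)) *ᵥ (b - A *ᵥ x k)))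
    (α β γ : ℝ) (hα : 0 < α) (hβ : 0 < β) (hγ : 0 < γ)
    (hαb : ∀ k : ℕ, sigmaMaxSq (subCols A (J k)) ≤ α)
    (hβb : ∀ k : ℕ, β ≤ frob2 (subCols A (J k)))
    (hγb : ∀ k : ℕ, frob2 A - frob2 (subCols A (J k)) ≤ γ) :
    ∀ k : ℕ, 1 ≤ k →
      norm2 (A *ᵥ (x k - xstar)) ≤
        (1 - β / α * (θ * frob2 A / γ + (1 - θ)) * (sigmaMinSq A / frob2 A)) ^ (k - 1) *
          ((1 - frob2 (subCols A (J 0)) / sigmaMaxSq (subCols A (J 0)) *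
              (sigmaMinSq A / frob2 A)) *
            norm2 (A *ᵥ (x 0 - xstar))) :=
  stmt9_general A hA b xstar hstar θ hθ x hres J hJ hiter α β γ hβ hγ hαb hβb hγb
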